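/- arXiv:2007.11288 — 4 statements merged into one kernel-verified Lean document; each statement's English description precedes it below -/
import Mathlib

section
/- Let σ = {σ_1, σ_2, σ_3} be the partition of the primes with σ_1 = {2,3}, σ_2 = {5}, and σ_3 all primes other than 2, 3 and 5. Let A be the nonabelian group of order 6 and G = A × C_5. Then G is a T-group, but G is not a T_σ-group; indeed, a subgroup of G of order 2 is σ-subnormal in G but not normal in G. -/
/-- A group is σ-primary if all primes dividing its order lie in a single member of σ. -/
def IsSigmaPrimary {ι : Type*} (σ : ι → Set ℕ) (G : Type*) [Group G] : Prop :=
  ∃ i, ∀ p : ℕ, p.Prime → p ∣ Nat.card G → p ∈ σ i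

/-- A subgroup `H` of `G` is σ-subnormal if there is a chain from `H` to `G` where each
step is either normal or the quotient by the normal core is σ-primary. -/
def IsSigmaSubnormal {ι : Type*} (σ : ι → Set ℕ) {G : Type*} [Group G] (H : Subgroup G) :
    Prop :=
  ∃ (n : ℕ) (f : Fin (n + 1) → Subgroup G),
    f 0 = H ∧ f (Fin.last n) = ⊤ ∧
    ∀ k : Fin n, f k.castSucc ≤ f k.succ ∧
      (((f k.castSucc).subgroupOf (f k.succ)).Normal ∨
        IsSigmaPrimary σ
          (↥(f k.succ) ⧸ ((f k.castSucc).subgroupOf (f k.succ)).normalCore))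

/-- `G` is a `T_σ`-group if every σ-subnormal subgroup of `G` is normal. -/
def IsTSigmaGroup {ι : Type*} (σ : ι → Set ℕ) (G : Type*) [Group G] : Prop :=
  ∀ H : Subgroup G, IsSigmaSubnormal σ H → H.Normal

/-- Hall π-subgroup: every prime dividing `|H|` is in π, no prime dividing `|G : H|` is in π. -/
def IsHallPiSubgroup {G : Type*} [Group G] (π : Set ℕ) (H : Subgroup G) : Prop :=
  (∀ p : ℕ, p.Prime → p ∣ Nat.card H → p ∈ π) ∧
  (∀ p : ℕ, p.Prime → p ∣ H.index → p ∉ π)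

/-- `G` satisfies the condition `R_{σᵢ}` (for the set of primes `σi`) if every subgroup of
every Hall π-subgroup `H` of `G` with `π ⊆ σi` is normal in the normalizer of `H`. -/
def ConditionR (σi : Set ℕ) (G : Type*) [Group G] : Prop :=
  ∀ π : Set ℕ, π ⊆ σi → ∀ H : Subgroup G, IsHallPiSubgroup π H →
    ∀ K : Subgroup G, K ≤ H → (K.subgroupOf (Subgroup.normalizer (H : Set G))).Normal

/-- `G` is σ-nilpotent: `G` is an (internal) direct product of σ-primary subgroups. -/
def IsSigmaNilpotent {ι : Type*} (σ : ι → Set ℕ) (G : Type*) [Group G] : Prop :=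
  ∃ (n : ℕ) (H : Fin n → Subgroup G),
    (∀ k, (H k).Normal) ∧ (∀ k, IsSigmaPrimary σ (H k)) ∧
    iSupIndep H ∧ iSup H = ⊤

/-- The σ-nilpotent residual of `G`: the intersection of all normal subgroups with
σ-nilpotent quotient. -/
def sigmaNilpotentResidual {ι : Type*} (σ : ι → Set ℕ) (G : Type*) [Group G] : Subgroup G :=
  ⨅ N ∈ {N : Subgroup G | N.Normal ∧ IsSigmaNilpotent σ (G ⧸ N.normalCore)}, N

/-- `K < H` is a chief factor of `G`. -/
def IsChiefFactor {G : Type*} [Group G] (K H : Subgroup G) : Prop :=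
  K.Normal ∧ H.Normal ∧ K < H ∧
    ∀ N : Subgroup G, N.Normal → K ≤ N → N ≤ H → N = K ∨ N = H

/-- `G` is σ-soluble if every chief factor of `G` is σ-primary. -/
def IsSigmaSolvable {ι : Type*} (σ : ι → Set ℕ) (G : Type*) [Group G] : Prop :=
  ∀ K H : Subgroup G, IsChiefFactor K H →
    IsSigmaPrimary σ (↥H ⧸ (K.subgroupOf H).normalCore)

/-- A Dedekind group: every subgroup is normal. -/
def IsDedekindGroup (G : Type*) [Group G] : Prop := ∀ H : Subgroup G, H.Normal

/-- `O_{πs}(D)`: the largest normal subgroup of `D` whose order involves only primes of `πs`,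
regarded as a subgroup of `G`. -/
def sigmaCoreIn {G : Type*} [Group G] (πs : Set ℕ) (D : Subgroup G) : Subgroup G :=
  ⨆ K ∈ {K : Subgroup G | K ≤ D ∧ (K.subgroupOf D).Normal ∧
      ∀ p : ℕ, p.Prime → p ∣ Nat.card K → p ∈ πs}, K

/-- A subnormal subgroup. -/
def IsSubnormal {G : Type*} [Group G] (H : Subgroup G) : Prop :=
  ∃ (n : ℕ) (f : Fin (n + 1) → Subgroup G),
    f 0 = H ∧ f (Fin.last n) = ⊤ ∧
    ∀ k : Fin n, f k.castSucc ≤ f k.succ ∧ ((f k.castSucc).subgroupOf (f k.succ)).Normal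

/-- A `T`-group: every subnormal subgroup is normal. -/
def IsTGroup (G : Type*) [Group G] : Prop :=
  ∀ H : Subgroup G, IsSubnormal H → H.Normal

/-- The nilpotent residual of `G`. -/
def nilpotentResidual (G : Type*) [Group G] : Subgroup G :=
  ⨅ N ∈ {N : Subgroup G | N.Normal ∧ Group.IsNilpotent (G ⧸ N.normalCore)}, N

/-- The statement (3) from the main theorem: (i) `G = D ⋊ M` with `D` an abelian Hall
subgroup of odd order and `M` Dedekind; (ii) every subgroup of `D` is normal in `G`;
(iii) `O_{σᵢ}(D)` has a normal complement in some Hall `σᵢ`-subgroup of `G` for all `i`. -/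
def SatisfiesGaschuetzSigma {ι : Type*} (σ : ι → Set ℕ) (G : Type*) [Group G] : Prop :=
  (sigmaNilpotentResidual σ G).Normal ∧
  (∃ M : Subgroup G, (sigmaNilpotentResidual σ G).IsComplement' M ∧ IsDedekindGroup M) ∧
  Nat.Coprime (Nat.card (sigmaNilpotentResidual σ G)) (sigmaNilpotentResidual σ G).index ∧
  Odd (Nat.card (sigmaNilpotentResidual σ G)) ∧
  (∀ x y : (sigmaNilpotentResidual σ G), x * y = y * x) ∧
  (∀ K : Subgroup G, K ≤ sigmaNilpotentResidual σ G → K.Normal) ∧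
  (∀ i, ∃ H : Subgroup G, IsHallPiSubgroup (σ i) H ∧
    sigmaCoreIn (σ i) (sigmaNilpotentResidual σ G) ≤ H ∧
    ∃ S : Subgroup G, S ≤ H ∧ (S.subgroupOf H).Normal ∧
      sigmaCoreIn (σ i) (sigmaNilpotentResidual σ G) ⊓ S = ⊥ ∧
      sigmaCoreIn (σ i) (sigmaNilpotentResidual σ G) ⊔ S = H)

instance sigmaNilpotentResidual_normal {ι : Type*} (σ : ι → Set ℕ) (G : Type*) [Group G] :
    (sigmaNilpotentResidual σ G).Normal := by
  constructor
  intro x hx g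
  simp only [sigmaNilpotentResidual, Subgroup.mem_iInf, Set.mem_setOf_eq] at hx ⊢
  intro N hN
  exact hN.1.conj_mem x (hx N hN) g

instance nilpotentResidual_normal (G : Type*) [Group G] : (nilpotentResidual G).Normal := by
  constructor
  intro x hx g
  simp only [nilpotentResidual, Subgroup.mem_iInf, Set.mem_setOf_eq] at hx ⊢
  intro N hN
  exact hN.1.conj_mem x (hx N hN) g

/-- The partition `σ = {σ₁, σ₂, σ₃}` where `σ₁ = {2,3}`, `σ₂ = {5}` and `σ₃` consists of
all primes other than `2`, `3` and `5`. -/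
def sigma6 : Fin 3 → Set ℕ :=
  ![{2, 3}, {5}, {p : ℕ | p.Prime ∧ p ∉ ({2, 3, 5} : Set ℕ)}]

/-!
In `A × C₅` (with `A ≅ S₃`) every subgroup of order `1, 3, 5, 6, 15` or `30` has the order of a
normal Hall subgroup `X × Y`, hence equals it and is normal. A subgroup `H` of order `2` or `10`
contains some `(u, 1)` with `u` an involution and lies in `⟨u⟩ × C₅`. As `⟨u⟩` is its own
centralizer in `A`, any `K` with `(u, 1) ∈ K ≤ ⟨u⟩ × C₅` has its normalizer inside `⟨u⟩ × C₅`,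
so a subnormal chain from `H` can never leave `⟨u⟩ × C₅`: `H` is not subnormal. In particular
`⟨(u, 1)⟩` is not normal, yet it is σ-subnormal through `⟨(u, 1)⟩ ≤ A × 1 ⊴ G`, the first step
being σ-primary because `|A × 1| = 6` involves only the primes of `σ₁ = {2, 3}`.
-/

open Subgroup hiding IsSubnormal

section Generalities

variable {G : Type*} [Group G]

theorem Subgroup.le_of_coprime_index {H N : Subgroup G} [N.Normal]
    (hcop : (Nat.card H).Coprime N.index) : H ≤ N := by
  have hmap : Nat.card (H.map (QuotientGroup.mk' N)) = 1 :=
    Nat.eq_one_of_dvd_coprimes hcop (H.card_map_dvd _)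
      (N.index_eq_card ▸ card_subgroup_dvd_card _)
  rwa [card_eq_one, map_eq_bot_iff, QuotientGroup.ker_mk'] at hmap

theorem Subgroup.eq_of_coprime_index_of_card_mul_index_eq [Finite G] {H N : Subgroup G} [N.Normal]
    (hcop : (Nat.card H).Coprime N.index) (hcard : Nat.card H * N.index = Nat.card G) :
    H = N := by
  refine eq_of_le_of_card_ge (le_of_coprime_index hcop) (le_of_eq ?_)
  rw [← N.card_mul_index] at hcard
  exact (Nat.eq_of_mul_eq_mul_right (Nat.pos_of_ne_zero index_ne_zero_of_finite) hcard).symm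

theorem isSubnormal_of_normal {H : Subgroup G} (hH : H.Normal) : IsSubnormal H :=
  ⟨1, ![H, ⊤], rfl, rfl, fun k => by
    fin_cases k
    exact ⟨le_top, hH.subgroupOf ⊤⟩⟩

theorem not_isSubnormal_of_normalizer_le {H M : Subgroup G} (hHM : H ≤ M) (hM : M ≠ ⊤)
    (hnorm : ∀ K : Subgroup G, H ≤ K → K ≤ M → normalizer (K : Set G) ≤ M) :
    ¬ IsSubnormal H := by
  rintro ⟨n, f, hf0, hflast, hchain⟩
  have hbetween : ∀ k : Fin (n + 1), H ≤ f k ∧ f k ≤ M := by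
    intro k
    induction k using Fin.induction with
    | zero => rw [hf0]; exact ⟨le_rfl, hHM⟩
    | succ i ih =>
      obtain ⟨hle, hnormal⟩ := hchain i
      exact ⟨ih.1.trans hle,
        (le_normalizer_of_normal_subgroupOf hle).trans (hnorm _ ih.1 ih.2)⟩
  exact hM (top_le_iff.mp (hflast ▸ (hbetween (Fin.last n)).2))

theorem IsSigmaPrimary.of_card_dvd {ι : Type*} {σ : ι → Set ℕ} {G' : Type*} [Group G']
    (hG : IsSigmaPrimary σ G) (hdvd : Nat.card G' ∣ Nat.card G) : IsSigmaPrimary σ G' :=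
  let ⟨i, hi⟩ := hG
  ⟨i, fun p hp hpG' => hi p hp (hpG'.trans hdvd)⟩

theorem isSigmaSubnormal_of_le_of_isSigmaPrimary {ι : Type*} {σ : ι → Set ℕ}
    {H N : Subgroup G} [N.Normal] (hHN : H ≤ N) (hN : IsSigmaPrimary σ N) :
    IsSigmaSubnormal σ H := by
  refine ⟨2, ![H, N, ⊤], rfl, rfl, fun k => ?_⟩
  fin_cases k
  · exact ⟨hHN, Or.inr (hN.of_card_dvd (card_quotient_dvd_card _))⟩
  · exact ⟨le_top, Or.inl ((inferInstance : N.Normal).subgroupOf ⊤)⟩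

end Generalities

section NonabelianOfOrderSix

variable {A : Type*} [Group A]

theorem card_center_eq_one_of_card_eq_six (hA : Nat.card A = 6)
    (hnab : ¬ ∀ x y : A, x * y = y * x) : Nat.card (center A) = 1 := by
  by_contra hZ
  have hsplit := (center A).card_eq_card_quotient_mul_card_subgroup
  rw [hA] at hsplit
  have hpos : 0 < Nat.card (center A) := Nat.pos_of_ne_zero (by rintro h; simp [h] at hsplit)
  have hquot : Nat.card (A ⧸ center A) ∣ 2 ∨ Nat.card (A ⧸ center A) ∣ 3 := by
    have hZ2 : 2 ≤ Nat.card (center A) := by omega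
    have hle : Nat.card (A ⧸ center A) ≤ 3 := by nlinarith
    interval_cases h : Nat.card (A ⧸ center A) <;> simp_all
  have : IsCyclic (A ⧸ center A) := by
    rcases hquot with h | h
    · exact isCyclic_of_card_dvd_prime (p := 2) h
    · exact isCyclic_of_card_dvd_prime (p := 3) h
  have := (QuotientGroup.mk' (center A)).isMulCommutative_of_isCyclic_of_ker_le_center
    (QuotientGroup.ker_mk' _).le
  exact hnab fun x y => this.is_comm.comm x y

theorem centralizer_eq_zpowers_of_orderOf_eq_two (hA : Nat.card A = 6)
    (hnab : ¬ ∀ x y : A, x * y = y * x) {u : A} (hu : orderOf u = 2) :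
    centralizer {u} = zpowers u := by
  have hle : zpowers u ≤ centralizer {u} :=
    zpowers_le.mpr (mem_centralizer_singleton_iff.mpr rfl)
  have hcard : Nat.card (zpowers u) = 2 := by rw [Nat.card_zpowers, hu]
  have hdvd6 : Nat.card (centralizer {u}) ∣ 6 := hA ▸ card_subgroup_dvd_card _
  have hdvd2 : 2 ∣ Nat.card (centralizer {u}) := hcard ▸ card_dvd_of_le hle
  have : Finite A := Nat.finite_of_card_ne_zero (by rw [hA]; norm_num)
  have hcases : Nat.card (centralizer {u}) = 2 ∨ Nat.card (centralizer {u}) = 6 := by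
    have := Nat.le_of_dvd (by norm_num) hdvd6
    interval_cases Nat.card (centralizer {u}) <;> simp_all
  rcases hcases with h | h
  · exact (eq_of_le_of_card_ge hle (by rw [h, hcard])).symm
  · have htop : centralizer {u} = ⊤ := eq_top_of_card_eq _ (h.trans hA.symm)
    have hcentral : u ∈ center A := mem_center_iff.mpr fun g =>
      mem_centralizer_singleton_iff.mp (htop ▸ mem_top g : g ∈ centralizer {u})
    have hbot : center A = ⊥ := card_eq_one.mp (card_center_eq_one_of_card_eq_six hA hnab)
    rw [hbot, mem_bot] at hcentral
    simp [hcentral] at hu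

theorem mem_zpowers_of_conj_mem_zpowers {u x : A} (hu : orderOf u = 2)
    (hC : centralizer {u} = zpowers u) (hx : x * u * x⁻¹ ∈ zpowers u) : x ∈ zpowers u := by
  classical
  have hfin : IsOfFinOrder u := orderOf_pos_iff.mp (by rw [hu]; norm_num)
  rw [hfin.mem_zpowers_iff_mem_range_orderOf, hu] at hx
  simp only [Finset.mem_image, Finset.mem_range] at hx
  obtain ⟨k, hk, hxk⟩ := hx
  interval_cases k
  · rw [pow_zero, eq_comm, mul_inv_eq_one, mul_eq_left] at hxk
    simp [hxk] at hu
  · rw [← hC, mem_centralizer_singleton_iff]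
    rw [pow_one, eq_comm, mul_inv_eq_iff_eq_mul] at hxk
    exact hxk

end NonabelianOfOrderSix

section Product

variable {A B : Type*} [Group A] [Group B] {u : A}

theorem normalizer_le_prod_zpowers_top
    (hu : ∀ x : A, x * u * x⁻¹ ∈ zpowers u → x ∈ zpowers u) {K : Subgroup (A × B)}
    (huK : ((u, 1) : A × B) ∈ K) (hK : K ≤ (zpowers u).prod ⊤) :
    normalizer (K : Set (A × B)) ≤ (zpowers u).prod ⊤ := by
  intro x hx
  have hconj := mem_prod.mp (hK ((mem_normalizer_iff.mp hx _).mp huK))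
  exact mem_prod.mpr ⟨hu x.1 (by simpa using hconj.1), mem_top _⟩

theorem not_isSubnormal_of_le_prod_zpowers_top
    (hu : ∀ x : A, x * u * x⁻¹ ∈ zpowers u → x ∈ zpowers u) (hutop : zpowers u ≠ ⊤)
    {H : Subgroup (A × B)} (huH : ((u, 1) : A × B) ∈ H) (hH : H ≤ (zpowers u).prod ⊤) :
    ¬ IsSubnormal H := by
  refine not_isSubnormal_of_normalizer_le hH (fun htop => hutop ?_)
    fun K hHK hKM => normalizer_le_prod_zpowers_top hu (hHK huH) hKM
  exact eq_top_iff.mpr fun x _ => (mem_prod.mp (htop ▸ mem_top (x, 1))).1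

theorem not_isSubnormal_of_orderOf_eq_two (hA : Nat.card A = 6)
    (hnab : ¬ ∀ x y : A, x * y = y * x) (hu : orderOf u = 2)
    {H : Subgroup (A × B)} (huH : ((u, 1) : A × B) ∈ H) (hH : H ≤ (zpowers u).prod ⊤) :
    ¬ IsSubnormal H := by
  refine not_isSubnormal_of_le_prod_zpowers_top
    (fun x => mem_zpowers_of_conj_mem_zpowers hu
      (centralizer_eq_zpowers_of_orderOf_eq_two hA hnab hu)) ?_ huH hH
  intro htop
  have := congrArg (fun K : Subgroup A => Nat.card K) htop
  simp [Nat.card_zpowers, hu, hA] at this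

/-- Cauchy gives an involution `(u, 1)` in `H`; since `3 ∤ |H|`, the image of `H` in `A` has
order `2`, so it is `⟨u⟩`. -/
theorem exists_orderOf_eq_two_le_prod_zpowers_top [Finite B] (hA : Nat.card A = 6)
    (hB : Odd (Nat.card B)) {H : Subgroup (A × B)} (h2 : 2 ∣ Nat.card H)
    (h3 : ¬ 3 ∣ Nat.card H) :
    ∃ u : A, orderOf u = 2 ∧ ((u, 1) : A × B) ∈ H ∧ H ≤ (zpowers u).prod ⊤ := by
  have : Finite A := Nat.finite_of_card_ne_zero (by rw [hA]; norm_num)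
  have : Fact (Nat.Prime 2) := ⟨Nat.prime_two⟩
  obtain ⟨g, hg⟩ := exists_prime_orderOf_dvd_card' (G := H) 2 h2
  have hg2 : orderOf (g : A × B) = 2 := by rw [orderOf_coe, hg]
  have hsnd : (g : A × B).2 = 1 := by
    have hdvd2 : orderOf (g : A × B).2 ∣ 2 := by
      rw [← hg2, Prod.orderOf (g : A × B)]
      exact Nat.dvd_lcm_right _ _
    have hdvd : orderOf (g : A × B).2 ∣ Nat.gcd 2 (Nat.card B) :=
      Nat.dvd_gcd hdvd2 (orderOf_dvd_natCard _)
    rwa [Nat.Coprime.gcd_eq_one (Nat.coprime_two_left.mpr hB), Nat.dvd_one,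
      orderOf_eq_one_iff] at hdvd
  set u := (g : A × B).1
  have hgu : (g : A × B) = (u, 1) := Prod.ext rfl hsnd
  have hu : orderOf u = 2 := by rw [← hg2, hgu, Prod.orderOf_mk]; simp
  have huH : ((u, 1) : A × B) ∈ H := hgu ▸ g.2
  have hmap : H.map (MonoidHom.fst A B) = zpowers u := by
    have hle : zpowers u ≤ H.map (MonoidHom.fst A B) := zpowers_le.mpr ⟨_, huH, rfl⟩
    refine (eq_of_le_of_card_ge hle ?_).symm
    have hdvdH := (H.card_map_dvd (MonoidHom.fst A B))
    have hdvdA : Nat.card (H.map (MonoidHom.fst A B)) ∣ 6 := hA ▸ card_subgroup_dvd_card _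
    have := Nat.le_of_dvd (by norm_num) hdvdA
    rw [Nat.card_zpowers, hu]
    interval_cases h : Nat.card (H.map (MonoidHom.fst A B)) <;> omega
  exact ⟨u, hu, huH, le_prod_iff.mpr ⟨hmap.le, le_top⟩⟩

end Product

theorem isTGroup_prod_multiplicative_zmod_five {A : Type*} [Group A] (hA : Nat.card A = 6)
    (hnab : ¬ ∀ x y : A, x * y = y * x) : IsTGroup (A × Multiplicative (ZMod 5)) := by
  have : Finite A := Nat.finite_of_card_ne_zero (by rw [hA]; norm_num)
  have : Fact (Nat.Prime 3) := ⟨Nat.prime_three⟩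
  have hC : Nat.card (Multiplicative (ZMod 5)) = 5 := by simp
  obtain ⟨a, ha⟩ := exists_prime_orderOf_dvd_card' (G := A) 3 (by rw [hA]; norm_num)
  have hP : (zpowers a).index = 2 := by
    have := (zpowers a).card_mul_index
    rw [Nat.card_zpowers, ha, hA] at this
    omega
  have := normal_of_index_eq_two hP
  intro H hH
  -- `X.prod Y` runs through the normal Hall subgroups of `A × C₅`
  have hall : ∀ (X : Subgroup A) [X.Normal] (Y : Subgroup (Multiplicative (ZMod 5))) [Y.Normal],
      (Nat.card H).Coprime (X.index * Y.index) → Nat.card H * (X.index * Y.index) = 30 →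
      H.Normal := by
    intro X _ Y _ hcop hcard
    rw [eq_of_coprime_index_of_card_mul_index_eq (H := H) (N := X.prod Y) (by rwa [index_prod])
      (by rw [index_prod, hcard, Nat.card_prod, hA, hC])]
    infer_instance
  have hdiv : Nat.card H ∈ Nat.divisors 30 :=
    Nat.mem_divisors.mpr ⟨by simpa [hA, hC] using card_subgroup_dvd_card H, by norm_num⟩
  rw [show Nat.divisors 30 = {1, 2, 3, 5, 6, 10, 15, 30} from rfl] at hdiv
  simp only [Finset.mem_insert, Finset.mem_singleton] at hdiv
  have hthree_dvd_of_two_dvd : 2 ∣ Nat.card H → 3 ∣ Nat.card H := fun h2 => by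
    by_contra h3
    obtain ⟨_, hu, huH, hle⟩ :=
      exists_orderOf_eq_two_le_prod_zpowers_top hA (by rw [hC]; decide) h2 h3
    exact not_isSubnormal_of_orderOf_eq_two hA hnab hu huH hle hH
  rcases hdiv with h | h | h | h | h | h | h | h
  · exact hall ⊥ ⊥ (by norm_num [h]) (by simp [h, hA])
  · exact absurd (hthree_dvd_of_two_dvd (by norm_num [h])) (by norm_num [h])
  · exact hall (zpowers a) ⊥ (by norm_num [h, hP]) (by simp [h, hP])
  · exact hall ⊥ ⊤ (by norm_num [h, hA]) (by simp [h, hA])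
  · exact hall ⊤ ⊥ (by norm_num [h]) (by simp [h])
  · exact absurd (hthree_dvd_of_two_dvd (by norm_num [h])) (by norm_num [h])
  · exact hall (zpowers a) ⊤ (by norm_num [h, hP]) (by simp [h, hP])
  · exact hall ⊤ ⊤ (by norm_num [h]) (by simp [h])

theorem isSigmaPrimary_sigma6_of_card_eq_six {G : Type*} [Group G] (hG : Nat.card G = 6) :
    IsSigmaPrimary sigma6 G := by
  refine ⟨0, fun p hp hdvd => ?_⟩
  rw [hG, show 6 = 2 * 3 from rfl, hp.dvd_mul, Nat.prime_dvd_prime_iff_eq hp Nat.prime_two,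
    Nat.prime_dvd_prime_iff_eq hp Nat.prime_three] at hdvd
  rcases hdvd with rfl | rfl <;> simp [sigma6]

/-- Let `A` be the nonabelian group of order `6` and `G = A × C₅`. Then
`G` is a `T`-group but not a `T_σ`-group for the partition `sigma6`: some subgroup of `G`
of order `2` is σ-subnormal in `G` but not normal in `G`. -/
theorem statement_6 (A : Type*) [Group A] [Finite A]
    (hA : Nat.card A = 6) (hnab : ¬ ∀ x y : A, x * y = y * x) :
    IsTGroup (A × Multiplicative (ZMod 5)) ∧
    ¬ IsTSigmaGroup sigma6 (A × Multiplicative (ZMod 5)) ∧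
    ∃ H : Subgroup (A × Multiplicative (ZMod 5)),
      Nat.card H = 2 ∧ IsSigmaSubnormal sigma6 H ∧ ¬ H.Normal := by
  have : Fact (Nat.Prime 2) := ⟨Nat.prime_two⟩
  obtain ⟨u, hu⟩ := exists_prime_orderOf_dvd_card' (G := A) 2 (by rw [hA]; norm_num)
  set H := zpowers ((u, 1) : A × Multiplicative (ZMod 5))
  have hcard : Nat.card H = 2 := by rw [Nat.card_zpowers, Prod.orderOf_mk, hu]; simp
  have hsigma : IsSigmaSubnormal sigma6 H :=
    isSigmaSubnormal_of_le_of_isSigmaPrimary (N := (⊤ : Subgroup A).prod ⊥)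
      (zpowers_le.mpr (mem_prod.mpr ⟨mem_top u, one_mem _⟩))
      (isSigmaPrimary_sigma6_of_card_eq_six (by
        rw [Nat.card_congr (prodEquiv _ _).toEquiv, Nat.card_prod, card_top, card_bot, hA]))
  have hnormal : ¬ H.Normal := fun h =>
    not_isSubnormal_of_orderOf_eq_two hA hnab hu (mem_zpowers _)
      (zpowers_le.mpr (mem_prod.mpr ⟨mem_zpowers u, mem_top _⟩)) (isSubnormal_of_normal h)
  exact ⟨isTGroup_prod_multiplicative_zmod_five hA hnab, fun hT => hnormal (hT H hsigma),
    H, hcard, hsigma, hnormal⟩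
end

section
/- Let σ be a partition of the set of all primes and let G be a finite σ-soluble group satisfying condition 𝔑R_{σ_i} for every member σ_i of σ. Then every Hall σ_i-subgroup of G (for every i) is a Dedekind group, and G is soluble. -/
/-! Condition `𝔑R_{σᵢ}` applied with `π = σᵢ` says that every subgroup of a Hall
`σᵢ`-subgroup `H` is normal in `N_G(H) ≥ H`, so `H` is Dedekind. For solubility, induct on `|G|`
through a minimal normal subgroup `N`. It is `σⱼ`-primary, so it lies in a Hall `σⱼ`-subgroup
(the preimage of one of `G/N`); hence `N` is Dedekind, so nilpotent. Every Hall `σᵢ`-subgroup of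
`G/N` is the image of a Hall `σᵢ`-subgroup of `G` (its preimage if `i = j`, a Schur–Zassenhaus
complement to `N` in the preimage otherwise), so the hypotheses pass to `G/N`, which is soluble
by induction. -/

open Subgroup QuotientGroup

section Dedekind

variable {G G' : Type*} [Group G] [Group G']

theorem IsDedekindGroup.of_surjective {f : G →* G'} (hf : Function.Surjective f)
    (h : IsDedekindGroup G) : IsDedekindGroup G' := fun S => by
  simpa only [map_comap_eq_self_of_surjective hf] using (h (S.comap f)).map f hf

theorem IsDedekindGroup.of_injective {f : G' →* G} (hf : Function.Injective f)
    (h : IsDedekindGroup G) : IsDedekindGroup G' := fun S => by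
  simpa only [comap_map_eq_self_of_injective hf] using (h (S.map f)).comap f

theorem IsDedekindGroup.isNilpotent [Finite G] (h : IsDedekindGroup G) : Group.IsNilpotent G :=
  (Group.isNilpotent_of_finite_tfae.out 0 2).mpr fun H _ => h H

theorem ConditionR.isDedekindGroup {π : Set ℕ} (hR : ConditionR π G) {H : Subgroup G}
    (hH : IsHallPiSubgroup π H) : IsDedekindGroup H := fun S => by
  have hSH : S.map H.subtype ≤ H := map_subtype_le S
  have hnorm := hR π le_rfl H hH _ hSH
  rw [normal_subgroupOf_iff_le_normalizer (hSH.trans le_normalizer)] at hnorm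
  simpa only [subgroupOf, comap_map_eq_self_of_injective H.subtype_injective] using
    (normal_subgroupOf_iff_le_normalizer hSH).mpr (le_normalizer.trans hnorm)

end Dedekind

section MinimalNormal

variable {G : Type*} [Group G]

def Subgroup.IsMinimalNormal (N : Subgroup G) : Prop :=
  Minimal (fun M : Subgroup G => M.Normal ∧ M ≠ ⊥) N

theorem Subgroup.IsMinimalNormal.isChiefFactor {N : Subgroup G} (hN : N.IsMinimalNormal) :
    IsChiefFactor ⊥ N :=
  ⟨normal_bot, hN.prop.1, bot_lt_iff_ne_bot.mpr hN.prop.2, fun M hM _ hMN =>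
    (eq_or_ne M ⊥).imp_right fun hM' => hN.eq_of_le ⟨hM, hM'⟩ hMN⟩

theorem exists_isMinimalNormal [Finite G] [Nontrivial G] : ∃ N : Subgroup G, N.IsMinimalNormal :=
  exists_minimal_of_wellFoundedLT _ ⟨⊤, normal_top, top_ne_bot⟩

theorem card_quotient_lt_card [Finite G] {N : Subgroup G} (hN : N ≠ ⊥) :
    Nat.card (G ⧸ N) < Nat.card G := by
  rw [← index_eq_card, ← N.card_mul_index]
  exact lt_mul_left (Nat.pos_of_ne_zero index_ne_zero_of_finite)
    ((one_lt_card_iff_ne_bot N).mpr hN)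

universe u

theorem Group.induction_on_minimalNormal
    {motive : ∀ (G : Type u) [Group G] [Finite G], Prop}
    (subsingleton : ∀ (G : Type u) [Group G] [Finite G] [Subsingleton G], motive G)
    (quotient : ∀ (G : Type u) [Group G] [Finite G] (N : Subgroup G) [N.Normal],
      N.IsMinimalNormal → motive (G ⧸ N) → motive G)
    (G : Type u) [Group G] [Finite G] : motive G := by
  induction h : Nat.card G using Nat.strong_induction_on generalizing G with
  | _ n ih =>
    rcases subsingleton_or_nontrivial G with hG | hG
    · exact subsingleton G
    obtain ⟨N, hN⟩ := exists_isMinimalNormal (G := G)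
    have := hN.prop.1
    exact quotient G N hN (ih _ (h ▸ card_quotient_lt_card hN.prop.2) (G ⧸ N) rfl)

end MinimalNormal

section Hall

variable {G : Type*} [Group G] (N : Subgroup G) [N.Normal] {π : Set ℕ}

theorem exists_isHallPiSubgroup_of_subsingleton [Subsingleton G] [Finite G] :
    ∃ H : Subgroup G, IsHallPiSubgroup π H := by
  have hG : Nat.card G = 1 := Nat.card_eq_one_iff_unique.mpr ⟨inferInstance, inferInstance⟩
  exact ⟨⊥, fun p hp hpH => (hp.not_dvd_one (by rwa [card_bot] at hpH)).elim,
    fun p hp hpH => (hp.not_dvd_one (by rwa [index_bot, hG] at hpH)).elim⟩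

theorem relIndex_comap_mk' (H' : Subgroup (G ⧸ N)) :
    N.relIndex (H'.comap (mk' N)) = Nat.card H' := by
  calc N.relIndex (H'.comap (mk' N))
      = ((⊥ : Subgroup (G ⧸ N)).comap (mk' N)).relIndex (H'.comap (mk' N)) := by
        rw [MonoidHom.comap_bot, ker_mk']
    _ = Nat.card H' := by
        rw [relIndex_comap, map_comap_eq_self_of_surjective (mk'_surjective N), relIndex_bot_left]

theorem card_comap_mk' (H' : Subgroup (G ⧸ N)) :
    Nat.card (H'.comap (mk' N)) = Nat.card N * Nat.card H' := by
  calc Nat.card (H'.comap (mk' N)) = (⊥ : Subgroup G).relIndex (H'.comap (mk' N)) :=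
        (relIndex_bot_left _).symm
    _ = (⊥ : Subgroup G).relIndex N * N.relIndex (H'.comap (mk' N)) :=
        (relIndex_mul_relIndex _ _ _ bot_le (le_comap_mk' N H')).symm
    _ = Nat.card N * Nat.card H' := by rw [relIndex_bot_left, relIndex_comap_mk']

theorem IsHallPiSubgroup.comap_mk' (hN : ∀ p : ℕ, p.Prime → p ∣ Nat.card N → p ∈ π)
    {H' : Subgroup (G ⧸ N)} (hH' : IsHallPiSubgroup π H') :
    IsHallPiSubgroup π (H'.comap (mk' N)) := by
  refine ⟨fun p hp hpH => ?_, fun p hp hpH => hH'.2 p hp ?_⟩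
  · rw [card_comap_mk'] at hpH
    exact (hp.dvd_mul.mp hpH).elim (hN p hp) (hH'.1 p hp)
  · rwa [index_comap_of_surjective _ (mk'_surjective N)] at hpH

theorem exists_isHallPiSubgroup_map_mk'_eq [Finite G]
    (hN : ∀ p : ℕ, p.Prime → p ∣ Nat.card N → p ∉ π)
    {H' : Subgroup (G ⧸ N)} (hH' : IsHallPiSubgroup π H') :
    ∃ C : Subgroup G, IsHallPiSubgroup π C ∧ C.map (mk' N) = H' := by
  set H := H'.comap (mk' N)
  have hNH : N ≤ H := le_comap_mk' N H'
  have hcardN : Nat.card (N.subgroupOf H) = Nat.card N :=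
    Nat.card_congr (subgroupOfEquivOfLe hNH).toEquiv
  have hcop : (Nat.card (N.subgroupOf H)).Coprime (N.subgroupOf H).index := by
    rw [hcardN, ← relIndex, relIndex_comap_mk']
    exact Nat.coprime_of_dvd fun p hp hpN hpH => hN p hp hpN (hH'.1 p hp hpH)
  obtain ⟨C', hC'⟩ := exists_right_complement'_of_coprime hcop
  set C := C'.map H.subtype
  have hcardC : Nat.card C = Nat.card H' := by
    rw [card_map_of_injective H.subtype_injective, ← hC'.symm.index_eq_card, ← relIndex,
      relIndex_comap_mk']
  have hindexC : C.index = Nat.card N * H'.index := by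
    rw [← relIndex_mul_index (map_subtype_le C'), index_comap_of_surjective _ (mk'_surjective N)]
    change (C.subgroupOf H).index * _ = _
    rw [subgroupOf, comap_map_eq_self_of_injective H.subtype_injective, hC'.index_eq_card, hcardN]
  have hsup : N ⊔ C = H := by
    simpa only [Subgroup.map_sup, subgroupOf_map_subtype, inf_eq_left.mpr hNH,
      ← MonoidHom.range_eq_map, range_subtype]
      using congrArg (map H.subtype) hC'.sup_eq_top
  refine ⟨C, ⟨fun p hp hpC => hH'.1 p hp (hcardC ▸ hpC), fun p hp hpC => ?_⟩, ?_⟩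
  · rw [hindexC] at hpC
    exact (hp.dvd_mul.mp hpC).elim (hN p hp) (hH'.2 p hp)
  · calc C.map (mk' N) = (N ⊔ C).map (mk' N) := by
          rw [Subgroup.map_sup, map_mk'_self, bot_sup_eq]
      _ = H' := by rw [hsup, map_comap_eq_self_of_surjective (mk'_surjective N)]

end Hall

section Sigma

variable {ι : Type*} {σ : ι → Set ℕ} {G G' : Type*} [Group G] [Group G']

theorem IsChiefFactor.card_quotient {K H : Subgroup G} (h : IsChiefFactor K H) :
    Nat.card (H ⧸ (K.subgroupOf H).normalCore) = K.relIndex H := by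
  have := h.1.subgroupOf H
  rw [normalCore_eq_self, ← index_eq_card, relIndex]

theorem IsChiefFactor.comap {f : G →* G'} (hf : Function.Surjective f) {K H : Subgroup G'}
    (h : IsChiefFactor K H) : IsChiefFactor (K.comap f) (H.comap f) := by
  obtain ⟨hK, hH, hKH, hmax⟩ := h
  refine ⟨hK.comap f, hH.comap f, (comap_lt_comap_of_surjective hf).mpr hKH,
    fun M hM hKM hMH => ?_⟩
  have hM' := hmax (M.map f) (hM.map f hf)
    (by simpa only [map_comap_eq_self_of_surjective hf] using map_mono (f := f) hKM)
    (by simpa only [map_comap_eq_self_of_surjective hf] using map_mono (f := f) hMH)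
  rw [← comap_map_eq_self ((ker_le_comap f K).trans hKM)]
  exact hM'.imp (congrArg _) (congrArg _)

theorem IsSigmaSolvable.of_surjective {f : G →* G'} (hf : Function.Surjective f)
    (h : IsSigmaSolvable σ G) : IsSigmaSolvable σ G' := fun K H hKH => by
  obtain ⟨i, hi⟩ := h _ _ (hKH.comap hf)
  refine ⟨i, fun p hp hpd => hi p hp ?_⟩
  rwa [(hKH.comap hf).card_quotient, relIndex_comap, map_comap_eq_self_of_surjective hf,
    ← hKH.card_quotient]

theorem IsSigmaSolvable.isSigmaPrimary {N : Subgroup G} (h : IsSigmaSolvable σ G)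
    (hN : N.IsMinimalNormal) : IsSigmaPrimary σ N := by
  obtain ⟨i, hi⟩ := h _ _ hN.isChiefFactor
  refine ⟨i, fun p hp hpd => hi p hp ?_⟩
  rwa [hN.isChiefFactor.card_quotient, relIndex_bot_left]

theorem exists_isHallPiSubgroup_map_mk'_eq_of_isSigmaPrimary [Finite G]
    (hσ : ∀ p : ℕ, p.Prime → ∃! i, p ∈ σ i) {N : Subgroup G} [N.Normal]
    (hN : IsSigmaPrimary σ N) {i : ι} {H' : Subgroup (G ⧸ N)}
    (hH' : IsHallPiSubgroup (σ i) H') :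
    ∃ C : Subgroup G, IsHallPiSubgroup (σ i) C ∧ C.map (mk' N) = H' := by
  obtain ⟨j, hj⟩ := hN
  by_cases hij : i = j
  · subst hij
    exact ⟨_, hH'.comap_mk' N hj, map_comap_eq_self_of_surjective (mk'_surjective N) H'⟩
  · exact exists_isHallPiSubgroup_map_mk'_eq N
      (fun p hp hpN hpi => hij ((hσ p hp).unique hpi (hj p hp hpN))) hH'

theorem IsSigmaSolvable.exists_isHallPiSubgroup [Finite G]
    (hσ : ∀ p : ℕ, p.Prime → ∃! i, p ∈ σ i) (h : IsSigmaSolvable σ G) (i : ι) :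
    ∃ H : Subgroup G, IsHallPiSubgroup (σ i) H := by
  revert h
  refine Group.induction_on_minimalNormal
    (motive := fun G _ _ => IsSigmaSolvable σ G → ∃ H : Subgroup G, IsHallPiSubgroup (σ i) H)
    (fun G _ _ _ _ => exists_isHallPiSubgroup_of_subsingleton)
    (fun G _ _ N _ hN ih h => ?_) G
  obtain ⟨H', hH'⟩ := ih (h.of_surjective (mk'_surjective N))
  obtain ⟨C, hC, -⟩ := exists_isHallPiSubgroup_map_mk'_eq_of_isSigmaPrimary hσ
    (h.isSigmaPrimary hN) hH'
  exact ⟨C, hC⟩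

theorem IsSigmaSolvable.isSolvable_of_isDedekindGroup [Finite G]
    (hσ : ∀ p : ℕ, p.Prime → ∃! i, p ∈ σ i) (h : IsSigmaSolvable σ G)
    (hD : ∀ i, ∀ H : Subgroup G, IsHallPiSubgroup (σ i) H → IsDedekindGroup H) :
    Group.IsSolvable G := by
  revert h hD
  refine Group.induction_on_minimalNormal (motive := fun G _ _ => IsSigmaSolvable σ G →
      (∀ i, ∀ H : Subgroup G, IsHallPiSubgroup (σ i) H → IsDedekindGroup H) →
      Group.IsSolvable G)
    (fun G _ _ _ _ _ => inferInstance) (fun G _ _ N _ hN ih h hD => ?_) G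
  have hNσ := h.isSigmaPrimary hN
  have hQ : IsSigmaSolvable σ (G ⧸ N) := h.of_surjective (mk'_surjective N)
  have : Group.IsSolvable (G ⧸ N) := ih hQ fun i H' hH' => by
    obtain ⟨C, hC, rfl⟩ := exists_isHallPiSubgroup_map_mk'_eq_of_isSigmaPrimary hσ hNσ hH'
    exact (hD i C hC).of_surjective ((mk' N).subgroupMap_surjective C)
  obtain ⟨j, hj⟩ := hNσ
  obtain ⟨H', hH'⟩ := hQ.exists_isHallPiSubgroup hσ j
  have : Group.IsNilpotent N := ((hD j _ (hH'.comap_mk' N hj)).of_injective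
    (inclusion_injective (le_comap_mk' N H'))).isNilpotent
  exact Group.isSolvable_of_ker_le_range N.subtype (mk' N) (by rw [ker_mk', range_subtype])

end Sigma

theorem statement_9_general {ι : Type*} (σ : ι → Set ℕ)
    (hσ_cover : ∀ p : ℕ, p.Prime → ∃! i, p ∈ σ i)
    (G : Type*) [Group G] [Finite G]
    (hsol : IsSigmaSolvable σ G)
    (hR : ∀ i, ConditionR (σ i) G) :
    (∀ i, ∀ H : Subgroup G, IsHallPiSubgroup (σ i) H → IsDedekindGroup H) ∧
    IsSolvable G := by
  have hD i H (hH : IsHallPiSubgroup (σ i) H) : IsDedekindGroup H := (hR i).isDedekindGroup hH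
  exact ⟨hD, hsol.isSolvable_of_isDedekindGroup hσ_cover hD⟩

/-- If a finite σ-soluble group `G` satisfies `R_{σᵢ}` for all `i`, then
every Hall `σᵢ`-subgroup of `G` is a Dedekind group (for every `i`), and `G` is soluble. -/
theorem statement_9 {ι : Type*} (σ : ι → Set ℕ)
    (hσ_prime : ∀ i, ∀ p ∈ σ i, Nat.Prime p)
    (hσ_cover : ∀ p : ℕ, p.Prime → ∃! i, p ∈ σ i)
    (G : Type*) [Group G] [Finite G]
    (hsol : IsSigmaSolvable σ G)
    (hR : ∀ i, ConditionR (σ i) G) :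
    (∀ i, ∀ H : Subgroup G, IsHallPiSubgroup (σ i) H → IsDedekindGroup H) ∧
    IsSolvable G :=
  statement_9_general σ hσ_cover G hsol hR
end

section
/- Let σ be a partition of the set of all primes and let G be a finite group satisfying condition 𝔑R_{σ_i} for every member σ_i of σ. If M is a Hall subgroup of G, then M satisfies condition 𝔑R_{σ_i} for every i, and the σ-nilpotent residual of M is contained in the σ-nilpotent residual of G, i.e., M^{𝔑_σ} ≤ G^{𝔑_σ}. -/
/-!
Since `M` is a Hall `π'`-subgroup, a Hall `π`-subgroup `H` of `M` is a Hall `(π ∩ π')`-subgroup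
of `G`, and the normalizer of `H` in `M` lies in the normalizer of `H` in `G`; so condition
`R_{σᵢ}` passes from `G` to `M`.

For the residuals, `M / (M ∩ N)` embeds in `G / N`, so it suffices that a finite group `A`
embedded in a σ-nilpotent group `D₁ × ⋯ × Dₙ` is σ-nilpotent. The σᵢ-component of `A` is the set
of elements whose coordinates are trivial in every factor `Dₖ` of class other than `i`. These
components are normal and independent because the coordinates determine an element, and each
contains every Sylow `p`-subgroup of `A` with `p ∈ σᵢ`, so together they generate `A`.
-/

theorem Subgroup.eq_top_of_forall_sylow_le {G : Type*} [Group G] [Finite G] (H : Subgroup G)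
    (h : ∀ (p : ℕ) [Fact p.Prime] (P : Sylow p G), (P : Subgroup G) ≤ H) : H = ⊤ := by
  have hH : Nat.card H ≠ 0 := Nat.card_pos.ne'
  refine H.eq_top_of_card_eq (Nat.dvd_antisymm H.card_subgroup_dvd_card ?_)
  refine (Nat.factorization_prime_le_iff_dvd Nat.card_pos.ne' hH).mp fun p hp => ?_
  have : Fact p.Prime := ⟨hp⟩
  obtain ⟨P⟩ : Nonempty (Sylow p G) := inferInstance
  rw [← hp.pow_dvd_iff_le_factorization hH, ← P.card_eq_multiplicity]
  exact Subgroup.card_dvd_of_le (h p P)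

section SigmaNilpotent

variable {ι : Type*} {σ : ι → Set ℕ}

theorem IsSigmaNilpotent.of_iSupIndep {Q : Type*} [Group Q] {κ : Type*} [Finite κ]
    (T : κ → Subgroup Q) (hnormal : ∀ k, (T k).Normal) (hprimary : ∀ k, IsSigmaPrimary σ (T k))
    (hind : iSupIndep T) (htop : iSup T = ⊤) : IsSigmaNilpotent σ Q := by
  obtain ⟨n, ⟨e⟩⟩ := Finite.exists_equiv_fin κ
  exact ⟨n, T ∘ e.symm, fun k => hnormal _, fun k => hprimary _, hind.comp e.symm.injective,
    e.symm.iSup_comp.trans htop⟩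

section ClassKernel

variable {A : Type*} [Group A] {κ : Type*} {B : κ → Type*} [∀ k, Group (B k)]
  (ψ : ∀ k, A →* B k) (c : κ → ι)

/-- When the `ψ k` jointly embed `A` in `∏ k, B k` and each `B k` is a `σ (c k)`-group, this is
the `σᵢ`-component of `A`. -/
def classKernel (i : ι) : Subgroup A :=
  ⨅ (k) (_ : c k ≠ i), (ψ k).ker

variable {ψ c}

theorem mem_classKernel {i : ι} {x : A} : x ∈ classKernel ψ c i ↔ ∀ k, c k ≠ i → ψ k x = 1 := by
  simp [classKernel]

instance classKernel_normal (i : ι) : (classKernel ψ c i).Normal :=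
  Subgroup.normal_iInf_normal fun _ => Subgroup.normal_iInf_normal fun _ => inferInstance

theorem iSupIndep_classKernel (hψ : ∀ x, (∀ k, ψ k x = 1) → x = 1) :
    iSupIndep (classKernel ψ c) := by
  intro i
  rw [Subgroup.disjoint_def]
  intro x hx hx'
  refine hψ x fun k => ?_
  by_cases hk : c k = i
  · have : (⨆ (j) (_ : j ≠ i), classKernel ψ c j) ≤ (ψ k).ker :=
      iSup₂_le fun j hj => iInf₂_le k (hk.trans_ne hj.symm)
    exact this hx'
  · exact mem_classKernel.1 hx k hk

theorem classKernel_eq_bot (hψ : ∀ x, (∀ k, ψ k x = 1) → x = 1) {i : ι}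
    (hi : i ∉ Set.range c) : classKernel ψ c i = ⊥ :=
  (Subgroup.eq_bot_iff_forall _).2 fun x hx =>
    hψ x fun k => mem_classKernel.1 hx k fun hk => hi ⟨k, hk⟩

variable (hB : ∀ k, ∀ p, p.Prime → p ∣ Nat.card (B k) → p ∈ σ (c k))
include hB

theorem mem_classKernel_of_pow_eq_one (hσ : ∀ p : ℕ, p.Prime → ∃! i, p ∈ σ i) {p : ℕ}
    (hp : p.Prime) {i : ι} (hpi : p ∈ σ i) {x : A} {a : ℕ} (hx : x ^ p ^ a = 1) :
    x ∈ classKernel ψ c i := by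
  refine mem_classKernel.2 fun k hk => ?_
  have hdvd : orderOf (ψ k x) ∣ p ^ a :=
    orderOf_dvd_of_pow_eq_one (by rw [← map_pow, hx, map_one])
  obtain ⟨b, -, hb⟩ := (Nat.dvd_prime_pow hp).1 hdvd
  rcases b with _ | b
  · exact orderOf_eq_one_iff.1 hb
  · have hpB : p ∣ Nat.card (B k) :=
      (dvd_pow_self p b.succ_ne_zero).trans (hb ▸ orderOf_dvd_natCard _)
    exact absurd ((hσ p hp).unique (hB k p hp hpB) hpi) hk

theorem prime_mem_of_dvd_card_classKernel [Finite A] (hψ : ∀ x, (∀ k, ψ k x = 1) → x = 1)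
    {i : ι} {p : ℕ} (hp : p.Prime) (hdvd : p ∣ Nat.card (classKernel ψ c i)) : p ∈ σ i := by
  have : Fact p.Prime := ⟨hp⟩
  obtain ⟨g, hg⟩ := exists_prime_orderOf_dvd_card' p hdvd
  obtain ⟨k, hk⟩ : ∃ k, ψ k g ≠ 1 := by
    by_contra! h
    have : g = 1 := Subtype.ext (hψ g h)
    exact hp.ne_one (hg ▸ this ▸ orderOf_one)
  have hck : c k = i := by
    by_contra h
    exact hk (mem_classKernel.1 g.2 k h)
  have hord : orderOf (ψ k g) = p := by
    have := orderOf_map_dvd (ψ k) (g : A)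
    rw [Subgroup.orderOf_coe, hg] at this
    exact (hp.eq_one_or_self_of_dvd _ this).resolve_left (mt orderOf_eq_one_iff.1 hk)
  exact hck ▸ hB k p hp (hord ▸ orderOf_dvd_natCard _)

theorem iSup_classKernel_eq_top [Finite A] (hσ : ∀ p : ℕ, p.Prime → ∃! i, p ∈ σ i) :
    ⨆ i, classKernel ψ c i = ⊤ := by
  refine Subgroup.eq_top_of_forall_sylow_le _ fun p hp P => ?_
  obtain ⟨i, hi, -⟩ := hσ p hp.out
  refine le_trans (fun x hx => ?_) (le_iSup _ i)
  obtain ⟨a, ha⟩ := P.isPGroup' ⟨x, hx⟩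
  exact mem_classKernel_of_pow_eq_one hB hσ hp.out hi (congrArg Subtype.val ha)

theorem isSigmaNilpotent_of_jointly_injective [Finite A] [Finite κ]
    (hσ : ∀ p : ℕ, p.Prime → ∃! i, p ∈ σ i) (hψ : ∀ x, (∀ k, ψ k x = 1) → x = 1) :
    IsSigmaNilpotent σ A := by
  refine IsSigmaNilpotent.of_iSupIndep (fun i : Set.range c => classKernel ψ c i)
    (fun _ => inferInstance)
    (fun i => ⟨i, fun p hp => prime_mem_of_dvd_card_classKernel hB hψ hp⟩)
    ((iSupIndep_classKernel hψ).comp Subtype.val_injective) ?_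
  refine eq_top_iff.2 ((iSup_classKernel_eq_top (ψ := ψ) hB hσ).ge.trans (iSup_le fun i => ?_))
  by_cases hi : i ∈ Set.range c
  · exact le_iSup (fun i : Set.range c => classKernel ψ c i) ⟨i, hi⟩
  · rw [classKernel_eq_bot hψ hi]
    exact bot_le

end ClassKernel

theorem IsSigmaNilpotent.of_injective {Q : Type*} [Group Q] [Finite Q]
    (hσ : ∀ p : ℕ, p.Prime → ∃! i, p ∈ σ i) (h : IsSigmaNilpotent σ Q)
    {A : Type*} [Group A] (f : A →* Q) (hf : Function.Injective f) : IsSigmaNilpotent σ A := by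
  obtain ⟨n, H, hnormal, hprimary, hind, htop⟩ := h
  choose c hc using hprimary
  have hcomm : Pairwise fun k l => ∀ x y : Q, x ∈ H k → y ∈ H l → Commute x y :=
    fun k l hkl => Subgroup.commute_of_normal_of_disjoint _ _ (hnormal k) (hnormal l)
      (hind.pairwiseDisjoint hkl)
  let e : (∀ k, H k) ≃* Q := MulEquiv.ofBijective (Subgroup.noncommPiCoprod hcomm)
    ⟨Subgroup.injective_noncommPiCoprod_of_iSupIndep hind,
      by rw [← MonoidHom.range_eq_top, Subgroup.noncommPiCoprod_range, htop]⟩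
  have : Finite A := Finite.of_injective f hf
  refine isSigmaNilpotent_of_jointly_injective
    (ψ := fun k => (Pi.evalMonoidHom _ k).comp (e.symm.toMonoidHom.comp f)) (c := c)
    hc hσ fun x hx => hf (e.symm.injective ?_)
  rw [map_one, map_one]
  exact funext hx

theorem sigmaNilpotentResidual_map_le {G : Type*} [Group G] [Finite G]
    (hσ : ∀ p : ℕ, p.Prime → ∃! i, p ∈ σ i) {H : Type*} [Group H] (f : H →* G) :
    (sigmaNilpotentResidual σ H).map f ≤ sigmaNilpotentResidual σ G := by
  refine le_iInf₂ fun N ⟨hN, hquot⟩ => Subgroup.map_le_iff_le_comap.2 ?_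
  let φ : H →* G ⧸ N.normalCore := (QuotientGroup.mk' N.normalCore).comp f
  have hker : (N.comap f).normalCore = φ.ker := by
    rw [Subgroup.normalCore_eq_self (N.comap f), ← MonoidHom.comap_ker, QuotientGroup.ker_mk',
      Subgroup.normalCore_eq_self]
  refine iInf₂_le (N.comap f) ⟨inferInstance, hquot.of_injective hσ
    ((QuotientGroup.kerLift φ).comp (QuotientGroup.quotientMulEquivOfEq hker).toMonoidHom) ?_⟩
  exact (QuotientGroup.kerLift_injective φ).comp (QuotientGroup.quotientMulEquivOfEq hker).injective

end SigmaNilpotent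

theorem IsHallPiSubgroup.map_subtype {G : Type*} [Group G] {M : Subgroup G} {π π' : Set ℕ}
    {H : Subgroup M} (hH : IsHallPiSubgroup π H) (hM : IsHallPiSubgroup π' M) :
    IsHallPiSubgroup (π ∩ π') (H.map M.subtype) := by
  refine ⟨fun p hp hdvd => ?_, fun p hp hdvd => ?_⟩
  · rw [Subgroup.card_map_of_injective M.subtype_injective] at hdvd
    exact ⟨hH.1 p hp hdvd, hM.1 p hp (hdvd.trans H.card_subgroup_dvd_card)⟩
  · rw [Subgroup.index_map_subtype] at hdvd
    rcases hp.dvd_mul.1 hdvd with h | h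
    exacts [fun hmem => hH.2 p hp h hmem.1, fun hmem => hM.2 p hp h hmem.2]

theorem ConditionR.of_isHallPiSubgroup {G : Type*} [Group G] {σi : Set ℕ} (hR : ConditionR σi G)
    {M : Subgroup G} {π' : Set ℕ} (hM : IsHallPiSubgroup π' M) : ConditionR σi M := by
  intro π hπ H hH K hKH
  have hRG := hR (π ∩ π') (fun p hp => hπ hp.1) _ (hH.map_subtype hM) _ (Subgroup.map_mono hKH)
  rw [Subgroup.normal_subgroupOf_iff (hKH.trans Subgroup.le_normalizer)]
  rw [Subgroup.normal_subgroupOf_iff ((Subgroup.map_mono hKH).trans Subgroup.le_normalizer)] at hRG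
  intro x g hx hg
  rw [← Subgroup.mem_map_iff_mem M.subtype_injective, map_mul, map_mul, map_inv]
  exact hRG _ _ (Subgroup.mem_map_of_mem _ hx)
    (Subgroup.le_normalizer_map _ (Subgroup.mem_map_of_mem _ hg))

theorem statement_10_general {ι : Type*} (σ : ι → Set ℕ)
    (hσ_cover : ∀ p : ℕ, p.Prime → ∃! i, p ∈ σ i)
    (G : Type*) [Group G] [Finite G]
    (hR : ∀ i, ConditionR (σ i) G)
    (M : Subgroup G) (hM : ∃ π : Set ℕ, IsHallPiSubgroup π M) :
    (∀ i, ConditionR (σ i) M) ∧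
    (sigmaNilpotentResidual σ M).map M.subtype ≤ sigmaNilpotentResidual σ G := by
  obtain ⟨π, hπ⟩ := hM
  exact ⟨fun i => (hR i).of_isHallPiSubgroup hπ, sigmaNilpotentResidual_map_le hσ_cover M.subtype⟩

/-- If a finite group `G` satisfies `R_{σᵢ}` for all `i` and `M` is a Hall
subgroup of `G`, then `M` satisfies `R_{σᵢ}` for all `i`, and `M^{𝔑_σ} ≤ G^{𝔑_σ}`. -/
theorem statement_10 {ι : Type*} (σ : ι → Set ℕ)
    (hσ_prime : ∀ i, ∀ p ∈ σ i, Nat.Prime p)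
    (hσ_cover : ∀ p : ℕ, p.Prime → ∃! i, p ∈ σ i)
    (G : Type*) [Group G] [Finite G]
    (hR : ∀ i, ConditionR (σ i) G)
    (M : Subgroup G) (hM : ∃ π : Set ℕ, IsHallPiSubgroup π M) :
    (∀ i, ConditionR (σ i) M) ∧
    (sigmaNilpotentResidual σ M).map M.subtype ≤ sigmaNilpotentResidual σ G :=
  statement_10_general σ hσ_cover G hR M hM
end

section
/- Let σ be a partition of the set of all primes and let G be a finite soluble group satisfying condition 𝔑R_{σ_i} for every member σ_i of σ. If R is a minimal normal subgroup of G, then the quotient G/R also satisfies condition 𝔑R_{σ_i} for every i. -/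
/-!
A minimal normal subgroup `R` of a soluble group is an abelian `p`-group. A Hall `π`-subgroup
`H̄` of `G/R` lifts to a Hall `π`-subgroup `H` of `G` with `HR/R = H̄` whose normaliser maps onto
`N(H̄)`: if `p ∈ π`, take the full preimage of `H̄`; if `p ∉ π`, take a Schur–Zassenhaus
complement `H` of `R` in that preimage, and the Frattini argument (complements of the abelian
normal Hall subgroup `R` are conjugate under `R`) shows that the normaliser of the preimage is
`R · N(H)`. Every subgroup of `H̄` is the image of a subgroup of `H`, which `N(H)` normalises.
-/

open Subgroup

namespace Subgroup

section MinimalNormal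

variable {G : Type*} [Group G] {R : Subgroup G} [R.Normal]

theorem isMulCommutative_of_minimal_normal [Group.IsSolvable G]
    (hmin : ∀ N : Subgroup G, N.Normal → N ≤ R → N = ⊥ ∨ N = R) : IsMulCommutative R := by
  rw [← le_centralizer_iff_isMulCommutative, ← commutator_eq_bot_iff_le_centralizer]
  obtain rfl | hR := eq_or_ne R ⊥
  · exact commutator_bot_left ⊥
  · exact (hmin _ inferInstance (commutator_le_right R R)).resolve_right
      (Group.IsSolvable.commutator_lt_of_ne_bot hR).ne

/-- A Sylow subgroup of the abelian group `R` is characteristic in `R`, hence normal in `G`. -/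
theorem exists_isPGroup_of_minimal_normal [Finite G] [IsMulCommutative R] (hbot : R ≠ ⊥)
    (hmin : ∀ N : Subgroup G, N.Normal → N ≤ R → N = ⊥ ∨ N = R) :
    ∃ p, p.Prime ∧ IsPGroup p R := by
  set p := (Nat.card R).minFac
  have hp : p.Prime := Nat.minFac_prime (R.one_lt_card_iff_ne_bot.mpr hbot).ne'
  have := Fact.mk hp
  obtain ⟨P⟩ : Nonempty (Sylow p R) := inferInstance
  have := P.characteristic_of_normal inferInstance
  rcases hmin _ inferInstance (map_subtype_le (P : Subgroup R)) with h | h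
  · exact absurd ((map_eq_bot_iff_of_injective _ R.subtype_injective).mp h)
      (P.ne_bot_of_dvd_card (Nat.minFac_dvd _))
  · have hP : (P : Subgroup R) = ⊤ := map_injective R.subtype_injective <| by
      rw [h, ← MonoidHom.range_eq_map, range_subtype]
    refine ⟨p, hp, fun g => ?_⟩
    obtain ⟨k, hk⟩ := P.isPGroup' ⟨g, hP ▸ mem_top g⟩
    exact ⟨k, congrArg Subtype.val hk⟩

end MinimalNormal

theorem map_conj_mul {G : Type*} [Group G] (H : Subgroup G) (x y : G) :
    H.map (MulAut.conj (x * y)) = (H.map (MulAut.conj y)).map (MulAut.conj x : G →* G) := by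
  rw [map_map]
  congr 1
  ext z
  simp [mul_assoc]

section Complement

variable {G : Type*} [Group G] [Finite G]

theorem IsComplement'.exists_eq_stabilizer {R : Subgroup G} [R.Normal] [IsMulCommutative R]
    (hco : Nat.Coprime (Nat.card R) R.index) {A : Subgroup G} (hA : IsComplement' R A) :
    ∃ α : R.QuotientDiff, A = MulAction.stabilizer G α := by
  refine ⟨Quotient.mk'' ⟨A, hA.symm⟩, eq_of_le_of_card_ge (fun a ha => ?_) ?_⟩
  · exact congrArg Quotient.mk'' (Subtype.ext (op_smul_coe_set (A.inv_mem ha)))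
  · refine Nat.le_of_mul_le_mul_left ?_ (Nat.card_pos (α := R))
    exact ((isComplement'_stabilizer_of_coprime hco).card_mul_card.trans
      hA.card_mul_card.symm).le

theorem IsComplement'.exists_eq_map_conj {R : Subgroup G} [R.Normal] [IsMulCommutative R]
    (hco : Nat.Coprime (Nat.card R) R.index) {A B : Subgroup G} (hA : IsComplement' R A)
    (hcard : Nat.card B = Nat.card A) : ∃ r ∈ R, B = A.map (MulAut.conj r) := by
  have hB : IsComplement' R B := isComplement'_of_coprime
    (hcard ▸ hA.card_mul_card) (hcard ▸ hA.symm.index_eq_card ▸ hco)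
  obtain ⟨α, rfl⟩ := hA.exists_eq_stabilizer hco
  obtain ⟨β, rfl⟩ := hB.exists_eq_stabilizer hco
  obtain ⟨r, rfl⟩ := Subgroup.exists_smul_eq hco α β
  exact ⟨r, r.2, MulAction.stabilizer_smul_eq_stabilizer_map_conj (r : G) α⟩

/-- Frattini argument: `N_G(K) ⊆ R · N_G(A)`. -/
theorem exists_inv_mul_mem_normalizer_of_isComplement' {R K : Subgroup G} [R.Normal]
    [IsMulCommutative R] {A : Subgroup K}
    (hco : Nat.Coprime (Nat.card (R.subgroupOf K)) (R.subgroupOf K).index)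
    (hA : IsComplement' (R.subgroupOf K) A) {g : G} (hg : g ∈ normalizer (K : Set G)) :
    ∃ r ∈ R, r⁻¹ * g ∈ normalizer (A.map K.subtype : Set G) := by
  have map_subtype_map (f : K →* K) (ψ : G →* G) (h : ∀ x : K, (f x : G) = ψ x) :
      (A.map f).map K.subtype = (A.map K.subtype).map ψ := by
    rw [map_map, map_map]
    congr 1
    ext x
    exact h x
  obtain ⟨r, hr, hconj⟩ := hA.exists_eq_map_conj hco
    (B := A.map (K.normalizerMonoidHom ⟨g, hg⟩)) (card_map_of_injective (MulEquiv.injective _))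
  refine ⟨r, hr, mem_normalizer_iff_map_conj_eq.mpr ?_⟩
  rw [map_conj_mul, ← map_subtype_map (K.normalizerMonoidHom ⟨g, hg⟩) (MulAut.conj g)
    fun _ => rfl, hconj, map_subtype_map (MulAut.conj (r : K)) (MulAut.conj (r : G)) fun _ => rfl,
    ← map_conj_mul, inv_mul_cancel, map_one]
  exact map_id _

end Complement

theorem normalizer_map_le_normalizer_of_le_map {G Q : Type*} [Group G] [Group Q] {φ : G →* Q}
    {H : Subgroup G} (hH : ∀ K ≤ H, normalizer (H : Set G) ≤ normalizer (K : Set G))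
    (hN : normalizer (H.map φ : Set Q) ≤ (normalizer (H : Set G)).map φ) {L : Subgroup Q}
    (hL : L ≤ H.map φ) : normalizer (H.map φ : Set Q) ≤ normalizer (L : Set Q) := by
  have hL' : (L.comap φ ⊓ H).map φ = L := by
    refine le_antisymm (map_le_iff_le_comap.mpr inf_le_left) fun x hx => ?_
    obtain ⟨k, hk, rfl⟩ := hL hx
    exact ⟨k, ⟨hx, hk⟩, rfl⟩
  calc normalizer (H.map φ : Set Q)
      ≤ (normalizer (H : Set G)).map φ := hN
    _ ≤ (normalizer ((L.comap φ ⊓ H : Subgroup G) : Set G)).map φ := map_mono (hH _ inf_le_right)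
    _ ≤ normalizer (((L.comap φ ⊓ H).map φ : Subgroup Q) : Set Q) := le_normalizer_map φ
    _ = normalizer (L : Set Q) := by rw [hL']

end Subgroup

section HallLift

variable {G : Type*} [Group G] {R : Subgroup G} [R.Normal] {π : Set ℕ}
  {Hbar : Subgroup (G ⧸ R)}

theorem isHallPiSubgroup_comap_mk' (hR : ∀ q, q.Prime → q ∣ Nat.card R → q ∈ π)
    (hHbar : IsHallPiSubgroup π Hbar) :
    IsHallPiSubgroup π (Hbar.comap (QuotientGroup.mk' R)) := by
  have hcard : Nat.card (Hbar.comap (QuotientGroup.mk' R)) = Nat.card R * Nat.card Hbar :=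
    QuotientGroup.card_preimage_mk R Hbar
  refine ⟨fun q hq hdvd => ?_, fun q hq hdvd => hHbar.2 q hq ?_⟩
  · rcases (Nat.Prime.dvd_mul hq).mp (hcard ▸ hdvd) with h | h
    exacts [hR q hq h, hHbar.1 q hq h]
  · rwa [← index_comap_of_surjective Hbar (QuotientGroup.mk'_surjective R)]

theorem isHallPiSubgroup_of_card_eq [Finite G] (hR : ∀ q, q.Prime → q ∣ Nat.card R → q ∉ π)
    (hHbar : IsHallPiSubgroup π Hbar) {H : Subgroup G} (hcard : Nat.card H = Nat.card Hbar) :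
    IsHallPiSubgroup π H := by
  have hindex : H.index = Hbar.index * Nat.card R := by
    refine Nat.eq_of_mul_eq_mul_left (Nat.card_pos (α := Hbar)) ?_
    rw [← mul_assoc, card_mul_index, ← card_eq_card_quotient_mul_card_subgroup, ← hcard,
      card_mul_index]
  refine ⟨fun q hq hdvd => hHbar.1 q hq (hcard ▸ hdvd), fun q hq hdvd => ?_⟩
  rcases (Nat.Prime.dvd_mul hq).mp (hindex ▸ hdvd) with h | h
  exacts [hHbar.2 q hq h, hR q hq h]

theorem exists_complement_map_mk'_eq [Finite G] [IsMulCommutative R]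
    (hR : ∀ q, q.Prime → q ∣ Nat.card R → q ∉ π) (hHbar : IsHallPiSubgroup π Hbar) :
    ∃ H : Subgroup G, Nat.card H = Nat.card Hbar ∧ H.map (QuotientGroup.mk' R) = Hbar ∧
      normalizer (Hbar : Set (G ⧸ R)) ≤ (normalizer (H : Set G)).map (QuotientGroup.mk' R) := by
  have hsurj := QuotientGroup.mk'_surjective R
  set K := Hbar.comap (QuotientGroup.mk' R)
  have hRK : R ≤ K := (QuotientGroup.ker_mk' R).ge.trans (ker_le_comap _ _)
  have hcardR : Nat.card (R.subgroupOf K) = Nat.card R :=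
    Nat.card_congr (subgroupOfEquivOfLe hRK).toEquiv
  have hindex : (R.subgroupOf K).index = Nat.card Hbar := by
    refine Nat.eq_of_mul_eq_mul_left (Nat.card_pos (α := R)) ?_
    rw [← hcardR, card_mul_index, hcardR]
    exact QuotientGroup.card_preimage_mk R Hbar
  have hco : Nat.Coprime (Nat.card (R.subgroupOf K)) (R.subgroupOf K).index := by
    rw [hcardR, hindex]
    exact Nat.coprime_of_dvd fun q hq hqR hqH => hR q hq hqR (hHbar.1 q hq hqH)
  obtain ⟨A, hA⟩ := exists_right_complement'_of_coprime hco
  refine ⟨A.map K.subtype, ?_, ?_, ?_⟩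
  · rw [card_map_of_injective K.subtype_injective, ← hA.symm.index_eq_card, hindex]
  · have hsup : A.map K.subtype ⊔ R = K := by
      rw [← inf_eq_left.mpr hRK, ← subgroupOf_map_subtype, ← Subgroup.map_sup, sup_comm,
        hA.sup_eq_top, ← MonoidHom.range_eq_map, range_subtype]
    rw [← map_comap_eq_self_of_surjective hsurj Hbar, map_eq_map_iff, QuotientGroup.ker_mk',
      hsup, sup_eq_left.mpr hRK]
  · intro x hx
    obtain ⟨g, rfl⟩ := hsurj x
    have hg : g ∈ normalizer (K : Set G) := by
      rwa [← comap_normalizer_eq_of_surjective _ hsurj]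
    obtain ⟨r, hr, hrg⟩ := exists_inv_mul_mem_normalizer_of_isComplement' hco hA hg
    refine ⟨r⁻¹ * g, hrg, ?_⟩
    simp [(QuotientGroup.eq_one_iff r).mpr hr]

theorem exists_isHallPiSubgroup_map_mk'_eq_s11 [Finite G] [IsMulCommutative R] {p : ℕ}
    (hp : p.Prime) (hRp : IsPGroup p R) (hHbar : IsHallPiSubgroup π Hbar) :
    ∃ H : Subgroup G, IsHallPiSubgroup π H ∧ H.map (QuotientGroup.mk' R) = Hbar ∧
      normalizer (Hbar : Set (G ⧸ R)) ≤ (normalizer (H : Set G)).map (QuotientGroup.mk' R) := by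
  have := Fact.mk hp
  have hsurj := QuotientGroup.mk'_surjective R
  obtain ⟨n, hn⟩ := IsPGroup.iff_card.mp hRp
  have hprimes (q : ℕ) (hq : q.Prime) (h : q ∣ Nat.card R) : q = p :=
    (Nat.prime_dvd_prime_iff_eq hq hp).mp (hq.dvd_of_dvd_pow (hn ▸ h))
  by_cases hpπ : p ∈ π
  · refine ⟨Hbar.comap (QuotientGroup.mk' R),
      isHallPiSubgroup_comap_mk' (fun q hq h => hprimes q hq h ▸ hpπ) hHbar,
      map_comap_eq_self_of_surjective hsurj Hbar, ?_⟩
    rw [← comap_normalizer_eq_of_surjective _ hsurj, map_comap_eq_self_of_surjective hsurj]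
  · have hR (q : ℕ) (hq : q.Prime) (h : q ∣ Nat.card R) : q ∉ π := hprimes q hq h ▸ hpπ
    obtain ⟨H, hcard, hmap, hN⟩ := exists_complement_map_mk'_eq hR hHbar
    exact ⟨H, isHallPiSubgroup_of_card_eq hR hHbar hcard, hmap, hN⟩

end HallLift

theorem statement_11_general {ι : Type*} (σ : ι → Set ℕ)
    (G : Type*) [Group G] [Finite G] (hsolv : IsSolvable G)
    (hR : ∀ i, ConditionR (σ i) G)
    (R : Subgroup G) [R.Normal] (hbot : R ≠ ⊥)
    (hmin : ∀ N : Subgroup G, N.Normal → N ≤ R → N = ⊥ ∨ N = R) :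
    ∀ i, ConditionR (σ i) (G ⧸ R) := by
  intro i π hπ Hbar hHbar Kbar hKbar
  have : Group.IsSolvable G := hsolv
  have := isMulCommutative_of_minimal_normal hmin
  obtain ⟨p, hp, hRp⟩ := exists_isPGroup_of_minimal_normal hbot hmin
  obtain ⟨H, hHall, rfl, hN⟩ := exists_isHallPiSubgroup_map_mk'_eq_s11 hp hRp hHbar
  have hH (K : Subgroup G) (hK : K ≤ H) : normalizer (H : Set G) ≤ normalizer (K : Set G) :=
    (normal_subgroupOf_iff_le_normalizer (hK.trans le_normalizer)).mp (hR i π hπ H hHall K hK)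
  exact (normal_subgroupOf_iff_le_normalizer (hKbar.trans le_normalizer)).mpr
    (normalizer_map_le_normalizer_of_le_map hH hN hKbar)

/-- If a finite soluble group `G` satisfies `R_{σᵢ}` for all `i` and `R`
is a minimal normal subgroup of `G`, then `G/R` also satisfies `R_{σᵢ}` for all `i`. -/
theorem statement_11 {ι : Type*} (σ : ι → Set ℕ)
    (hσ_prime : ∀ i, ∀ p ∈ σ i, Nat.Prime p)
    (hσ_cover : ∀ p : ℕ, p.Prime → ∃! i, p ∈ σ i)
    (G : Type*) [Group G] [Finite G] (hsolv : IsSolvable G)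
    (hR : ∀ i, ConditionR (σ i) G)
    (R : Subgroup G) [R.Normal] (hbot : R ≠ ⊥)
    (hmin : ∀ N : Subgroup G, N.Normal → N ≤ R → N = ⊥ ∨ N = R) :
    ∀ i, ConditionR (σ i) (G ⧸ R) :=
  statement_11_general σ G hsolv hR R hbot hmin
end
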